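/- Suppose T and S are normal binary ℵ₁-trees such that the tree product T ⊗ S is a Souslin tree. Then T ∩ S is countable. -/

import Mathlib

noncomputable section

open Cardinal Set

/-- The first uncountable ordinal `ω₁`. -/
def omega1 : Ordinal := (Cardinal.aleph 1).ord

/-- A transfinite binary sequence: a function `t : α → 2` for some ordinal `α`. -/
abbrev BinSeq : Type 1 := Σ α : Ordinal, (Set.Iio α → Bool)

namespace BinSeq

/-- The restriction `t ↾ β` of a binary sequence `t` to an initial segment of its domain. -/
def restrict (t : BinSeq) (β : Ordinal) (h : β ≤ t.1) : BinSeq :=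
  ⟨β, fun x => t.2 ⟨x.1, lt_of_lt_of_le x.2 h⟩⟩

/-- `s.sub t`: `s` is an initial segment of `t` (that is, `s ⊆ t`). -/
def sub (s t : BinSeq) : Prop := ∃ h : s.1 ≤ t.1, t.restrict s.1 h = s

/-- `s.ssub t`: `s` is a proper initial segment of `t` (that is, `s ⊊ t`). -/
def ssub (s t : BinSeq) : Prop := ∃ h : s.1 < t.1, t.restrict s.1 h.le = s

end BinSeq

/-- A candidate branch: a function `f : ω₁ → 2`. -/
abbrev BinBranch : Type 1 := Set.Iio omega1 → Bool

/-- The restriction `f ↾ α` of `f : ω₁ → 2` to an ordinal `α < ω₁`. -/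
def BinBranch.restrict (f : BinBranch) (α : Ordinal) (h : α < omega1) : BinSeq :=
  ⟨α, fun x => f ⟨x.1, lt_trans x.2 h⟩⟩

/-- `C` is a closed unbounded (club) subset of `ω₁`: it is a set of countable ordinals,
unbounded in `ω₁`, and closed under suprema of bounded nonempty subsets. -/
def IsClubBelow (C : Set Ordinal) : Prop :=
  C ⊆ Set.Iio omega1 ∧
  (∀ β < omega1, ∃ α ∈ C, β < α) ∧
  (∀ s : Set Ordinal, s ⊆ C → s.Nonempty → sSup s < omega1 → sSup s ∈ C)

/-- `S` is a stationary subset of `ω₁`: it meets every club subset of `ω₁`. -/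
def IsStationaryBelow (S : Set Ordinal) : Prop :=
  ∀ C : Set Ordinal, IsClubBelow C → (S ∩ C).Nonempty

/-- `T` is a binary ℵ₁-tree: a downward closed family of binary sequences of
countable length, all of whose levels are countable. -/
structure IsBinaryAleph1Tree (T : Set BinSeq) : Prop where
  dom_lt : ∀ t ∈ T, t.1 < omega1
  downward_closed : ∀ t ∈ T, ∀ β, ∀ h : β ≤ t.1, t.restrict β h ∈ T
  countable_levels : ∀ α < omega1, {t | t ∈ T ∧ t.1 = α}.Countable

/-- The set of cofinal branches of a binary tree:
functions `f : ω₁ → 2` all of whose initial segments lie in `T`. -/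
def BinBranches (T : Set BinSeq) : Set BinBranch :=
  {f | ∀ α, ∀ h : α < omega1, f.restrict α h ∈ T}

/-- A binary Kurepa tree: a binary ℵ₁-tree with at least ℵ₂-many cofinal branches. -/
def IsBinaryKurepa (T : Set BinSeq) : Prop :=
  IsBinaryAleph1Tree T ∧ Cardinal.aleph 2 ≤ #(↥(BinBranches T))

/-- `◇(T)` for a binary tree `T`: there is a transversal `⟨t_α | α < ω₁⟩` with `t_α ∈ T_α`
such that for every cofinal branch `f` of `T`, the set `{α < ω₁ | f ↾ α = t_α}` is stationary. -/
def BinDiamond (T : Set BinSeq) : Prop :=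
  ∃ t : Ordinal → BinSeq,
    (∀ α < omega1, t α ∈ T ∧ (t α).1 = α) ∧
    ∀ f ∈ BinBranches T,
      IsStationaryBelow {α | ∃ h : α < omega1, BinBranch.restrict f α h = t α}

/-- An abstract tree: a strict partial order in which the set of predecessors
of every point is well-ordered. -/
structure OTree where
  carrier : Type
  lt : carrier → carrier → Prop
  lt_trans : ∀ {x y z}, lt x y → lt y z → lt x z
  lt_irrefl : ∀ x, ¬ lt x x
  pred_wellOrder : ∀ x, IsWellOrder {y // lt y x} fun a b => lt a.1 b.1

namespace OTree

/-- The height of a node: the order type of its set of predecessors. -/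
def height (t : OTree) (x : t.carrier) : Ordinal :=
  @Ordinal.type {y // t.lt y x} (fun a b => t.lt a.1 b.1) (t.pred_wellOrder x)

/-- The `α`-th level of the tree. -/
def level (t : OTree) (α : Ordinal) : Set t.carrier := {x | t.height x = α}

/-- An ℵ₁-tree: a tree of height `ω₁` all of whose levels are countable. -/
def IsAleph1Tree (t : OTree) : Prop :=
  (∀ x, t.height x < omega1) ∧
  (∀ α < omega1, (t.level α).Nonempty) ∧
  (∀ α < omega1, (t.level α).Countable)

/-- A tree is Hausdorff if nodes of the same limit height
with the same predecessors are equal. -/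
def Hausdorff (t : OTree) : Prop :=
  ∀ x y : t.carrier, Order.IsSuccLimit (t.height x) → t.height x = t.height y →
    {z | t.lt z x} = {z | t.lt z y} → x = y

/-- The set of cofinal branches: uncountable maximal chains. -/
def branches (t : OTree) : Set (Set t.carrier) :=
  {C | IsMaxChain t.lt C ∧ ¬ C.Countable}

/-- A Kurepa tree: an ℵ₁-tree with at least ℵ₂-many cofinal branches. -/
def IsKurepa (t : OTree) : Prop :=
  t.IsAleph1Tree ∧ Cardinal.aleph 2 ≤ #(↥t.branches)

/-- `◇(𝐓)`: there is a transversal `⟨b_α | α < ω₁⟩` with `b_α ∈ T_α` such that for every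
cofinal branch `f`, the set `{α < ω₁ | f ↾ α = b_α}` (i.e. the set of `α < ω₁` such that
`b_α` is the unique element of `f` on the `α`-th level) is stationary. -/
def Diamond (t : OTree) : Prop :=
  ∃ b : Ordinal → t.carrier,
    (∀ α < omega1, b α ∈ t.level α) ∧
    ∀ f ∈ t.branches,
      IsStationaryBelow {α | α < omega1 ∧ f ∩ t.level α = {b α}}

/-- A tree has height `ω₁` if every node has countable height
and every countable level is nonempty. -/
def HasHeightOmega1 (t : OTree) : Prop :=
  (∀ x, t.height x < omega1) ∧ ∀ α < omega1, (t.level α).Nonempty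

end OTree

/-- A normal binary ℵ₁-tree: every node admits extensions at every level below `ω₁`. -/
def IsNormalBinaryAleph1Tree (T : Set BinSeq) : Prop :=
  IsBinaryAleph1Tree T ∧
  ∀ t ∈ T, ∀ α, t.1 ≤ α → α < omega1 → ∃ t' ∈ T, t'.1 = α ∧ t.sub t'

/-- The strict ordering of the tree product: coordinatewise proper extension. -/
def ProdLt (p q : BinSeq × BinSeq) : Prop := p.1.ssub q.1 ∧ p.2.ssub q.2

/-- The tree product `T ⊗ S`: pairs `(x, y) ∈ T × S` with `dom x = dom y`. -/
def TreeProd (T S : Set BinSeq) : Set (BinSeq × BinSeq) :=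
  {p | p.1 ∈ T ∧ p.2 ∈ S ∧ p.1.1 = p.2.1}

/-- `T ⊗ S` is a Souslin tree: it has height `ω₁`, countable levels, no uncountable chain
and no uncountable antichain. -/
def ProdIsSouslin (T S : Set BinSeq) : Prop :=
  (∀ α < omega1, ∃ p ∈ TreeProd T S, p.1.1 = α) ∧
  (∀ α < omega1, {p | p ∈ TreeProd T S ∧ p.1.1 = α}.Countable) ∧
  (∀ C ⊆ TreeProd T S, IsChain ProdLt C → C.Countable) ∧
  (∀ A ⊆ TreeProd T S,
    (∀ p ∈ A, ∀ q ∈ A, p ≠ q → ¬ ProdLt p q ∧ ¬ ProdLt q p) → A.Countable)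

/-!
If `T ∩ S` were uncountable, then above every countable level some node of `T ∩ S` would have
two incomparable extensions in `T ∩ S`: otherwise `T ∩ S` is covered by countably many cones that
are chains, and a chain `C` of `T ∩ S` gives the chain `{(x, x) | x ∈ C}` of `T ⊗ S`. Cut at the
level where they first differ, these extensions form a pair `(u, v) ∈ T ⊗ S` of distinct immediate
successors of a common node. Two such split pairs are never comparable in `T ⊗ S`, since above a
split pair the two coordinates never agree again; so they form an uncountable antichain.
-/

namespace BinSeq

theorem restrict_sub (t : BinSeq) {β : Ordinal} (h : β ≤ t.1) : (t.restrict β h).sub t :=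
  ⟨h, rfl⟩

theorem sub_restrict {s t : BinSeq} (h : s.sub t) {β : Ordinal} (hs : s.1 ≤ β) (ht : β ≤ t.1) :
    s.sub (t.restrict β ht) :=
  ⟨hs, h.2⟩

theorem sub_of_sub_of_sub_of_fst_le {s r t : BinSeq} (hs : s.sub t) (hr : r.sub t)
    (h : s.1 ≤ r.1) : s.sub r := by
  obtain ⟨hr, he⟩ := hr
  exact he ▸ sub_restrict hs h hr

theorem eq_of_sub_of_fst_eq {s t : BinSeq} (h : s.sub t) (hd : s.1 = t.1) : s = t := by
  obtain ⟨a, f⟩ := s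
  obtain ⟨hl, he⟩ := h
  dsimp only at hd
  subst hd
  exact he.symm

theorem ssub.sub {s t : BinSeq} (h : s.ssub t) : s.sub t :=
  ⟨h.1.le, h.2⟩

theorem ssub_of_sub_of_ne {s t : BinSeq} (h : s.sub t) (hne : s ≠ t) : s.ssub t :=
  ⟨h.1.lt_of_ne fun hd => hne (eq_of_sub_of_fst_eq h hd), h.2⟩

theorem snd_apply_of_sub {s t : BinSeq} (h : s.sub t) {δ : Ordinal} (hδ : δ < s.1) :
    t.2 ⟨δ, hδ.trans_le h.1⟩ = s.2 ⟨δ, hδ⟩ := by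
  obtain ⟨a, f⟩ := s
  obtain ⟨hl, he⟩ := h
  obtain ⟨-, hf⟩ := Sigma.mk.inj_iff.mp he
  exact congrFun (eq_of_heq hf) ⟨δ, hδ⟩

end BinSeq

open Cardinal in
theorem countable_Iio_iff_lt_omega1 {γ : Ordinal.{0}} : (Iio γ).Countable ↔ γ < omega1 := by
  rw [← le_aleph0_iff_set_countable, mk_Iio_ordinal, lift_le_aleph0, omega1, lt_ord,
    lt_aleph_one_iff]

namespace IsBinaryAleph1Tree

variable {T : Set BinSeq} (hT : IsBinaryAleph1Tree T)
include hT

theorem mem_of_sub {s t : BinSeq} (ht : t ∈ T) (h : s.sub t) : s ∈ T := by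
  obtain ⟨h, he⟩ := h
  exact he ▸ hT.downward_closed t ht _ h

theorem countable_fst_lt {γ : Ordinal} (hγ : γ < omega1) : {t | t ∈ T ∧ t.1 < γ}.Countable := by
  refine ((countable_Iio_iff_lt_omega1.2 hγ).biUnion fun α hα =>
    hT.countable_levels α (lt_trans hα hγ)).mono fun t ht => ?_
  exact mem_biUnion (show t.1 ∈ Iio γ from ht.2) ⟨ht.1, rfl⟩

end IsBinaryAleph1Tree

open BinSeq

def IsSplitPair (u v : BinSeq) : Prop :=
  ∃ w : BinSeq, w.sub u ∧ w.sub v ∧ u.1 = Order.succ w.1 ∧ v.1 = Order.succ w.1 ∧ u ≠ v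

theorem IsSplitPair.not_prodLt {p q : BinSeq × BinSeq} (hp : IsSplitPair p.1 p.2)
    (hq : IsSplitPair q.1 q.2) : ¬ ProdLt p q := by
  rintro ⟨h₁, h₂⟩
  obtain ⟨w, -, -, hu, hv, hne⟩ := hp
  obtain ⟨w', hw'u, hw'v, hu', hv', -⟩ := hq
  have hlt : w.1 < w'.1 := Order.succ_lt_succ_iff.1 (hu ▸ hu' ▸ h₁.1)
  -- `q.1` and `q.2` agree up to `w'`, which is long enough to contain `p.1` and `p.2`
  have hu_w' : p.1.sub w' :=
    sub_of_sub_of_sub_of_fst_le h₁.sub hw'u (hu ▸ Order.succ_le_of_lt hlt)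
  have hv_w' : p.2.sub w' :=
    sub_of_sub_of_sub_of_fst_le h₂.sub hw'v (hv ▸ Order.succ_le_of_lt hlt)
  have hfst : p.1.1 = p.2.1 := hu.trans hv.symm
  exact hne (eq_of_sub_of_fst_eq (sub_of_sub_of_sub_of_fst_le hu_w' hv_w' hfst.le) hfst)

theorem countable_setOf_isSplitPair {T S : Set BinSeq}
    (hanti : ∀ A ⊆ TreeProd T S,
      (∀ p ∈ A, ∀ q ∈ A, p ≠ q → ¬ ProdLt p q ∧ ¬ ProdLt q p) → A.Countable) :
    {p | p ∈ TreeProd T S ∧ IsSplitPair p.1 p.2}.Countable :=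
  hanti _ (fun _ hp => hp.1) fun _ hp _ hq _ =>
    ⟨hp.2.not_prodLt hq.2, hq.2.not_prodLt hp.2⟩

theorem countable_of_isChain_ssub {T S : Set BinSeq}
    (hchain : ∀ C ⊆ TreeProd T S, IsChain ProdLt C → C.Countable) {C : Set BinSeq}
    (hC : C ⊆ T ∩ S) (hCc : IsChain BinSeq.ssub C) : C.Countable := by
  have hdiag : ((fun x => (x, x)) '' C).Countable :=
    hchain _ (image_subset_iff.2 fun x hx => ⟨(hC hx).1, (hC hx).2, rfl⟩)
      (by
        rintro _ ⟨x, hx, rfl⟩ _ ⟨y, hy, rfl⟩ hne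
        exact (hCc hx hy fun h => hne (h ▸ rfl)).imp (fun h => ⟨h, h⟩) fun h => ⟨h, h⟩)
  simpa [image_image] using hdiag.image Prod.fst

theorem exists_isSplitPair_of_ne {x y z : BinSeq} (hd : y.1 = z.1) (hne : y ≠ z)
    (hy : x.sub y) (hz : x.sub z) :
    ∃ u v, u.sub y ∧ v.sub z ∧ x.1 < u.1 ∧ IsSplitPair u v := by
  obtain ⟨a, f⟩ := y
  obtain ⟨b, g⟩ := z
  dsimp only at hd
  subst hd
  set D : Set Ordinal := {δ | ∃ h : δ < a, f ⟨δ, h⟩ ≠ g ⟨δ, h⟩}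
  have hD : D.Nonempty := by
    by_contra hD
    refine hne (congrArg (Sigma.mk a) (funext fun i => ?_))
    exact by_contra fun hi => hD ⟨i.1, i.2, hi⟩
  set β := sInf D
  obtain ⟨hβ, hdiff⟩ : β ∈ D := csInf_mem hD
  have hagree : ∀ δ (hδ : δ < β), f ⟨δ, hδ.trans hβ⟩ = g ⟨δ, hδ.trans hβ⟩ :=
    fun δ hδ => by_contra fun h => (csInf_le' (show δ ∈ D from ⟨_, h⟩)).not_gt hδ
  have hxβ : x.1 ≤ β := not_lt.1 fun hlt =>
    hdiff ((snd_apply_of_sub hy hlt).trans (snd_apply_of_sub hz hlt).symm)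
  have hsucc : Order.succ β ≤ a := Order.succ_le_of_lt hβ
  refine ⟨_, _, restrict_sub ⟨a, f⟩ hsucc, restrict_sub ⟨a, g⟩ hsucc,
    hxβ.trans_lt (Order.lt_succ β), BinSeq.restrict ⟨a, f⟩ β hβ.le, ⟨Order.le_succ β, rfl⟩,
    ⟨Order.le_succ β, ?_⟩, rfl, rfl, fun h => hdiff ?_⟩
  · exact congrArg (Sigma.mk β) (funext fun i => (hagree i.1 i.2).symm)
  · exact congrFun (eq_of_heq (Sigma.mk.inj_iff.mp h).2) ⟨β, Order.lt_succ β⟩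

section Souslin

variable {T S : Set BinSeq} (hT : IsBinaryAleph1Tree T) (hS : IsBinaryAleph1Tree S)
  (hchain : ∀ C ⊆ TreeProd T S, IsChain ProdLt C → C.Countable)
include hT hS hchain

theorem exists_ne_of_not_countable_inter (hTS : ¬ (T ∩ S).Countable) {γ : Ordinal}
    (hγ : γ < omega1) :
    ∃ x y z : BinSeq,
      y ∈ T ∩ S ∧ z ∈ T ∩ S ∧ x.sub y ∧ x.sub z ∧ x.1 = γ ∧ y.1 = z.1 ∧ y ≠ z := by
  by_contra! hcon
  have hcone : ∀ x : BinSeq, x.1 = γ → {y | y ∈ T ∩ S ∧ x.sub y}.Countable := by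
    intro x hx
    have hsub : ∀ y ∈ {y | y ∈ T ∩ S ∧ x.sub y}, ∀ z ∈ {y | y ∈ T ∩ S ∧ x.sub y},
        y.1 ≤ z.1 → y.sub z := by
      rintro y ⟨hy, hxy⟩ z ⟨hz, hxz⟩ hle
      have hz' : z.restrict y.1 hle ∈ T ∩ S :=
        ⟨hT.mem_of_sub hz.1 (restrict_sub z hle), hS.mem_of_sub hz.2 (restrict_sub z hle)⟩
      exact hcon x y _ hy hz' hxy (sub_restrict hxz hxy.1 hle) hx rfl ▸ restrict_sub z hle
    refine countable_of_isChain_ssub hchain (fun y hy => hy.1) fun y hy z hz hne => ?_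
    rcases le_total y.1 z.1 with hle | hle
    · exact Or.inl (ssub_of_sub_of_ne (hsub y hy z hz hle) hne)
    · exact Or.inr (ssub_of_sub_of_ne (hsub z hz y hy hle) hne.symm)
  refine hTS (((hT.countable_fst_lt hγ).union
    ((hT.countable_levels γ hγ).biUnion fun x hx => hcone x hx.2)).mono fun y hy => ?_)
  rcases lt_or_ge y.1 γ with hlt | hle
  · exact Or.inl ⟨hy.1, hlt⟩
  · exact Or.inr (mem_biUnion (⟨hT.mem_of_sub hy.1 (restrict_sub y hle), rfl⟩ :
      y.restrict γ hle ∈ {t | t ∈ T ∧ t.1 = γ}) ⟨hy, restrict_sub y hle⟩)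

theorem exists_isSplitPair_gt (hTS : ¬ (T ∩ S).Countable) {γ : Ordinal} (hγ : γ < omega1) :
    ∃ p ∈ TreeProd T S, IsSplitPair p.1 p.2 ∧ γ < p.1.1 := by
  obtain ⟨x, y, z, hy, hz, hxy, hxz, rfl, hd, hne⟩ :=
    exists_ne_of_not_countable_inter hT hS hchain hTS hγ
  obtain ⟨u, v, huy, hvz, hxu, huv⟩ := exists_isSplitPair_of_ne hd hne hxy hxz
  have huv_fst : u.1 = v.1 := by
    obtain ⟨w, -, -, hu, hv, -⟩ := huv
    exact hu.trans hv.symm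
  exact ⟨(u, v), ⟨hT.mem_of_sub hy.1 huy, hS.mem_of_sub hz.2 hvz, huv_fst⟩, huv, hxu⟩

end Souslin

/-- If `T` and `S` are normal binary ℵ₁-trees whose tree product `T ⊗ S`
is a Souslin tree, then `T ∩ S` is countable. -/
theorem statement16 (T S : Set BinSeq)
    (hT : IsNormalBinaryAleph1Tree T) (hS : IsNormalBinaryAleph1Tree S)
    (h : ProdIsSouslin T S) :
    (T ∩ S).Countable := by
  by_contra hTS
  obtain ⟨-, -, hchain, hanti⟩ := h
  have hsplit := countable_setOf_isSplitPair hanti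
  refine (lt_irrefl omega1) (countable_Iio_iff_lt_omega1.1 ?_)
  refine (hsplit.biUnion fun p hp => countable_Iio_iff_lt_omega1.2 (hT.1.dom_lt _ hp.1.1)).mono
    fun γ hγ => ?_
  obtain ⟨p, hp, hpsplit, hγp⟩ := exists_isSplitPair_gt hT.1 hS.1 hchain hTS hγ
  exact mem_biUnion (show p ∈ {p | p ∈ TreeProd T S ∧ IsSplitPair p.1 p.2} from ⟨hp, hpsplit⟩)
    hγp
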